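/- Let C = [[13,−2],[20,−3]], P_{1/3} = [[1, 1/3],[0,1]], and L₂₀ = [[4, −1/2],[10, −1]]. Then the matrix C⁻¹P_{1/3}L₂₀² = [[−3, 1/2],[−30, 14/3]] lies in SL(2,ℝ) and is an elliptic matrix of infinite order. -/

import Mathlib

/-!
The matrix `E = [[-3, 1/2], [-30, 14/3]]` has determinant `1` and trace `5/3`, so its
discriminant `25/9 - 4` is negative, i.e. `E` is elliptic.

By Cayley–Hamilton `E² = tE - 1` with `t = tr E`, hence `E^(n+1) = S_n(t) E - S_{n-1}(t)` for the
rescaled Chebyshev polynomials `S_n`. Since the lower-left entry of `E` is nonzero,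
`E^(n+1) = 1` would force `S_n(t) = 0`; but `S_n` is monic with integer coefficients, so by the
rational root theorem its rational roots are integers, and `5/3` is not one.
-/

open Matrix MatrixGroups UpperHalfPlane Polynomial Polynomial.Chebyshev

namespace Polynomial.Chebyshev

theorem monic_S_natCast_and_degree (R : Type*) [CommRing R] [Nontrivial R] :
    ∀ n : ℕ, (S R n).Monic ∧ (S R n).degree = n
  | 0 => by simp
  | 1 => by simp
  | n + 2 => by
    obtain ⟨-, hdeg₀⟩ := monic_S_natCast_and_degree R n
    obtain ⟨hmon₁, hdeg₁⟩ := monic_S_natCast_and_degree R (n + 1)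
    have hS : S R (n + 2 : ℕ) = X * S R (n + 1 : ℕ) - S R n := by
      push_cast
      exact S_add_two R n
    have hdeg : (X * S R (n + 1 : ℕ)).degree = ((n + 2 : ℕ) : WithBot ℕ) := by
      rw [X_mul, degree_mul_X, hdeg₁]
      norm_cast
    have hlt : (S R n).degree < (X * S R (n + 1 : ℕ)).degree := by
      rw [hdeg, hdeg₀]
      exact_mod_cast (by omega : n < n + 2)
    rw [hS, degree_sub_eq_left_of_degree_lt hlt, hdeg]
    exact ⟨(monic_X.mul hmon₁).sub_of_left hlt, rfl⟩

theorem eval_S_ratCast_ne_zero {K : Type*} [Field K] [CharZero K] {q : ℚ} (hq : q.den ≠ 1)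
    (n : ℕ) : (S K n).eval (q : K) ≠ 0 := by
  intro h
  have hroot : aeval q (S ℤ n) = 0 := by
    have hK : algebraMap ℚ K ((S ℚ n).eval q) = 0 := by
      rw [algebraMap_eval_S, eq_ratCast]
      exact h
    rw [aeval_S]
    exact (map_eq_zero _).1 hK
  obtain ⟨k, hk⟩ := isInteger_of_is_root_of_monic (monic_S_natCast_and_degree ℤ n).1 hroot
  exact hq (by simp [← hk])

end Polynomial.Chebyshev

namespace Matrix

variable {R : Type*} [CommRing R]

theorem sq_eq_trace_smul_sub_det_smul (A : Matrix (Fin 2) (Fin 2) R) :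
    A ^ 2 = A.trace • A - A.det • 1 := by
  ext i j
  fin_cases i <;> fin_cases j <;>
    simp [sq, mul_apply, trace_fin_two, det_fin_two] <;> ring

theorem pow_succ_eq_eval_S_smul_sub {A : Matrix (Fin 2) (Fin 2) R} (hA : A.det = 1) (n : ℕ) :
    A ^ (n + 1) = (S R n).eval A.trace • A - (S R (n - 1)).eval A.trace • 1 := by
  induction n with
  | zero => simp
  | succ n ih =>
    have hsq : A * A = A.trace • A - 1 := by
      rw [← sq, sq_eq_trace_smul_sub_det_smul, hA, one_smul]
    rw [pow_succ, ih, sub_mul, smul_mul_assoc, hsq, smul_mul_assoc, one_mul, Nat.cast_succ,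
      S_add_one]
    simp only [eval_sub, eval_mul, eval_X, add_sub_cancel_right]
    module

theorem SpecialLinearGroup.pow_ne_one_of_trace_eq_ratCast {K : Type*} [Field K] [CharZero K]
    {g : SL(2, K)} (hc : g 1 0 ≠ 0) {q : ℚ} (htr : (g : Matrix (Fin 2) (Fin 2) K).trace = q)
    (hq : q.den ≠ 1) {n : ℕ} (hn : 0 < n) : g ^ n ≠ 1 := by
  obtain ⟨m, rfl⟩ := Nat.exists_eq_add_of_lt hn
  intro h
  have h10 := congr_fun₂ (congrArg Subtype.val h) 1 0
  rw [zero_add, SpecialLinearGroup.coe_pow, pow_succ_eq_eval_S_smul_sub g.det_coe, htr] at h10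
  simp only [sub_apply, smul_apply, one_apply_ne one_ne_zero, smul_eq_mul, mul_zero, sub_zero,
    SpecialLinearGroup.coe_one, mul_eq_zero] at h10
  exact eval_S_ratCast_ne_zero hq m (h10.resolve_right hc)

end Matrix

theorem UpperHalfPlane.existsUnique_smul_eq_self_of_isElliptic {g : SL(2, ℝ)}
    (hg : (g : Matrix (Fin 2) (Fin 2) ℝ).IsElliptic) : ∃! z : ℍ, g • z = z := by
  have hpos : 0 < (g : GL (Fin 2) ℝ).val.det := by simp
  have hell : (g : GL (Fin 2) ℝ).IsElliptic := by
    simpa only [GeneralLinearGroup.IsElliptic, SpecialLinearGroup.coe_GL_coe_matrix] using hg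
  exact ⟨fixedPt _ hell, (gl_smul_eq_self_iff_eq_fixedPt hpos hell).2 rfl,
    fun _ ↦ (gl_smul_eq_self_iff_eq_fixedPt hpos hell).1⟩

/-- With `C = [[13,-2],[20,-3]]`, `P_{1/3} = [[1,1/3],[0,1]]` and
`L₂₀ = [[4,-1/2],[10,-1]]`, the matrix `C⁻¹ P_{1/3} L₂₀² = [[-3,1/2],[-30,14/3]]`
lies in `SL(2,ℝ)` and is elliptic of infinite order. -/
theorem C_inv_P_L_sq_elliptic_infinite_order :
    (!![13, -2; 20, -3] : Matrix (Fin 2) (Fin 2) ℝ)⁻¹ * !![1, 1/3; 0, 1] *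
        (!![4, -1/2; 10, -1] : Matrix (Fin 2) (Fin 2) ℝ) ^ 2 =
      !![-3, 1/2; -30, 14/3] ∧
    (!![-3, 1/2; -30, 14/3] : Matrix (Fin 2) (Fin 2) ℝ).det = 1 ∧
    ∃ E : SL(2, ℝ), (E : Matrix (Fin 2) (Fin 2) ℝ) = !![-3, 1/2; -30, 14/3] ∧
      (∃! z : ℍ, E • z = z) ∧
      (∀ n : ℕ, 0 < n → E ^ n ≠ 1) := by
  have hdet : (!![-3, 1/2; -30, 14/3] : Matrix (Fin 2) (Fin 2) ℝ).det = 1 := by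
    norm_num [det_fin_two_of]
  have hell : (!![-3, 1/2; -30, 14/3] : Matrix (Fin 2) (Fin 2) ℝ).IsElliptic := by
    norm_num [IsElliptic, discr_fin_two, trace_fin_two_of, det_fin_two_of]
  have htr : (!![-3, 1/2; -30, 14/3] : Matrix (Fin 2) (Fin 2) ℝ).trace = ((5/3 : ℚ) : ℝ) := by
    norm_num [trace_fin_two_of]
  refine ⟨?_, hdet, ⟨_, hdet⟩, rfl, existsUnique_smul_eq_self_of_isElliptic hell,
    fun n hn ↦ SpecialLinearGroup.pow_ne_one_of_trace_eq_ratCast (by norm_num) htr (by norm_num) hn⟩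
  rw [inv_def, adjugate_fin_two_of, det_fin_two_of, sq]
  norm_num [smul_of]
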